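/- For all a, b ∈ V × V, h_Q(J_y a, J_y b) = h_Q(a, b). Together with J_y² = −id and the positive definiteness of h_Q, this says that (T̃M, h_Q, J̃) is an almost Hermitian manifold. -/
import Mathlib


open scoped InnerProductSpace

/-- The twin tensor `h_Q` of the 0-homogeneous lift `g̃₂` with respect to the natural
almost product structure `Q̃`, represented pointwise on `W = V × V` by
`h_Q((u₁,w₁),(u₂,w₂)) = 2⟨u₁,u₂⟩ + (2/‖y‖²)⟨w₁,w₂⟩`. -/
noncomputable def hQ {V : Type*} [NormedAddCommGroup V] [InnerProductSpace ℝ V]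
    (y : V) (a b : V × V) : ℝ :=
  2 * ⟪a.1, b.1⟫_ℝ + (2 / ‖y‖ ^ 2) * ⟪a.2, b.2⟫_ℝ

/-- The natural almost complex structure `J̃`, represented pointwise on `W = V × V` by
`J_y(u,w) = ((1/‖y‖)w, −‖y‖u)`. -/
noncomputable def Jnat {V : Type*} [NormedAddCommGroup V] [InnerProductSpace ℝ V]
    (y : V) (a : V × V) : V × V :=
  ((1 / ‖y‖) • a.2, -(‖y‖ • a.1))

/-- `h_Q(J_y a, J_y b) = h_Q(a, b)`; together with `J_y² = −id` and the positive
definiteness of `h_Q`, the triple `(T̃M, h_Q, J̃)` is an almost Hermitian manifold. -/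
theorem almost_hermitian_structure
    (V : Type*) [NormedAddCommGroup V] [InnerProductSpace ℝ V] [FiniteDimensional ℝ V]
    (y : V) (hy : y ≠ 0) :
    (∀ a b : V × V, hQ y (Jnat y a) (Jnat y b) = hQ y a b) ∧
    (∀ a : V × V, Jnat y (Jnat y a) = -a) ∧
    (∀ a : V × V, a ≠ 0 → 0 < hQ y a a) := by
  have hn : ‖y‖ ≠ 0 := norm_ne_zero_iff.mpr hy
  have hn2 : (‖y‖ : ℝ) ^ 2 ≠ 0 := pow_ne_zero 2 hn
  refine ⟨fun a b => ?_, fun a => ?_, fun a ha => ?_⟩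
  · simp only [hQ, Jnat, inner_smul_left, inner_smul_right, inner_neg_neg,
      RCLike.conj_to_real, map_one]
    field_simp
    ring
  · simp only [Jnat, smul_neg, smul_smul]
    rw [one_div, inv_mul_cancel₀ hn, mul_inv_cancel₀ hn]
    simp [Prod.ext_iff]
  · have h1 : (0:ℝ) ≤ ⟪a.1, a.1⟫_ℝ := real_inner_self_nonneg
    have h2 : (0:ℝ) ≤ ⟪a.2, a.2⟫_ℝ := real_inner_self_nonneg
    have hpos : (0:ℝ) < 2 / ‖y‖ ^ 2 := by positivity
    rcases Prod.mk.injEq a.1 a.2 0 0 ▸ (fun h => ha (Prod.ext_iff.mpr h)) with _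
    by_cases h : a.1 = 0
    · have h2' : a.2 ≠ 0 := fun h' => ha (Prod.ext h h')
      have : (0:ℝ) < ⟪a.2, a.2⟫_ℝ := by
        rw [real_inner_self_eq_norm_sq]
        exact pow_pos (norm_pos_iff.mpr h2') 2
      unfold hQ
      nlinarith
    · have : (0:ℝ) < ⟪a.1, a.1⟫_ℝ := by
        rw [real_inner_self_eq_norm_sq]
        exact pow_pos (norm_pos_iff.mpr h) 2
      unfold hQ
      nlinarith
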